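/- Let 0 < r < R and define G(x) = R·g(x/R) - r·g(x/r) for 0 ≤ x ≤ r and G(x) = R·g(x/R) for r ≤ x ≤ R, where g(x) = (√(1-x²) - x·arccos(x))/π. Then the area of the region D = {(x,y) : 0 ≤ x ≤ R, 0 ≤ y ≤ G(x)}, i.e., ∫_0^R G(x) dx, equals (R² - r²)/8. -/

import Mathlib

/-! Since `g 1 = 0`, `G r R` is continuous, and on `[0, R]` it is `x ↦ R g(x/R)` minus the
restriction of `x ↦ r g(x/r)` to `[0, r]`. Substituting `x = c t` gives
`∫₀^c c g(x/c) dx = c² ∫₀¹ g = c²/8`, so the area is `R²/8 - r²/8`. -/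

noncomputable def g (x : ℝ) : ℝ := (Real.sqrt (1 - x^2) - x * Real.arccos x) / Real.pi

noncomputable def G (r R x : ℝ) : ℝ :=
  if x ≤ r then R * g (x / R) - r * g (x / r) else R * g (x / R)

open Real intervalIntegral

-- The `arcsin` and `x² arccos x` terms come from integrating `x arccos x` by parts.
noncomputable def gPrimitive (x : ℝ) : ℝ :=
  (3 * x * √(1 - x ^ 2) + arcsin x - 2 * x ^ 2 * arccos x) / (4 * π)

@[fun_prop]
lemma continuous_g : Continuous g := by
  unfold g
  fun_prop

lemma continuous_gPrimitive : Continuous gPrimitive := by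
  unfold gPrimitive
  fun_prop

lemma g_one : g 1 = 0 := by
  simp [g, arccos_one]

lemma hasDerivAt_gPrimitive {x : ℝ} (h₁ : -1 < x) (h₂ : x < 1) :
    HasDerivAt gPrimitive (g x) x := by
  have hpos : 0 < 1 - x ^ 2 := by nlinarith
  have hs : √(1 - x ^ 2) ≠ 0 := by positivity
  have hsq : √(1 - x ^ 2) ^ 2 = 1 - x ^ 2 := sq_sqrt hpos.le
  have hsqrt : HasDerivAt (fun x : ℝ => √(1 - x ^ 2)) (-(2 * x) / (2 * √(1 - x ^ 2))) x := by
    have hinner : HasDerivAt (fun x : ℝ => 1 - x ^ 2) (-(2 * x)) x := by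
      simpa using (hasDerivAt_pow 2 x).const_sub 1
    exact ((hasDerivAt_sqrt hpos.ne').comp x hinner).congr_deriv (by ring)
  have harcsin : HasDerivAt arcsin (1 / √(1 - x ^ 2)) x := hasDerivAt_arcsin h₁.ne' h₂.ne
  have harccos : HasDerivAt arccos (-(1 / √(1 - x ^ 2))) x := hasDerivAt_arccos h₁.ne' h₂.ne
  have hsum := (((((hasDerivAt_id x).const_mul 3).mul hsqrt).add harcsin).sub
    (((hasDerivAt_pow 2 x).const_mul 2).mul harccos)).div_const (4 * π)
  refine hsum.congr_deriv ?_
  simp only [g, id, Nat.cast_ofNat]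
  field_simp
  linear_combination -hsq

lemma integral_g_zero_one : ∫ x in (0:ℝ)..1, g x = 1 / 8 := by
  rw [integral_eq_sub_of_hasDeriv_right_of_le zero_le_one continuous_gPrimitive.continuousOn
    (fun x hx => (hasDerivAt_gPrimitive (by linarith [hx.1]) hx.2).hasDerivWithinAt)
    (continuous_g.intervalIntegrable 0 1)]
  simp [gPrimitive, arcsin_one, arccos_one]
  field_simp
  ring

lemma integral_mul_g_div_self {c : ℝ} (hc : c ≠ 0) :
    ∫ x in (0:ℝ)..c, c * g (x / c) = c ^ 2 / 8 := by
  rw [integral_const_mul, integral_comp_div g hc, zero_div, div_self hc, integral_g_zero_one,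
    smul_eq_mul]
  ring

lemma G_of_le {r R x : ℝ} (hx : x ≤ r) : G r R x = R * g (x / R) - r * g (x / r) :=
  if_pos hx

lemma G_of_ge {r R x : ℝ} (hr : r ≠ 0) (hx : r ≤ x) : G r R x = R * g (x / R) := by
  rcases hx.eq_or_lt with rfl | hlt
  · simp [G, div_self hr, g_one]
  · exact if_neg hlt.not_ge

lemma continuous_G {r R : ℝ} (hr : r ≠ 0) : Continuous (G r R) :=
  Continuous.if_le (by fun_prop) (by fun_prop) continuous_id continuous_const
    fun x hx => by simp [hx, div_self hr, g_one]

theorem area_under_G (r R : ℝ) (hr : 0 < r) (hR : r < R) :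
    ∫ x in (0:ℝ)..R, G r R x = (R^2 - r^2) / 8 := by
  have hG := continuous_G (R := R) hr.ne'
  have hgR : Continuous fun x => R * g (x / R) := by fun_prop
  have hgr : Continuous fun x => r * g (x / r) := by fun_prop
  calc ∫ x in (0:ℝ)..R, G r R x
      = (∫ x in (0:ℝ)..r, G r R x) + ∫ x in r..R, G r R x :=
        (integral_add_adjacent_intervals (hG.intervalIntegrable _ _)
          (hG.intervalIntegrable _ _)).symm
    _ = (∫ x in (0:ℝ)..r, (R * g (x / R) - r * g (x / r))) + ∫ x in r..R, R * g (x / R) := by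
        congr 1 <;> refine integral_congr fun x hx => ?_
        · exact G_of_le (Set.uIcc_of_le hr.le ▸ hx).2
        · exact G_of_ge hr.ne' (Set.uIcc_of_le hR.le ▸ hx).1
    _ = ((∫ x in (0:ℝ)..r, R * g (x / R)) + ∫ x in r..R, R * g (x / R))
          - ∫ x in (0:ℝ)..r, r * g (x / r) := by
        rw [integral_sub (hgR.intervalIntegrable _ _) (hgr.intervalIntegrable _ _)]
        ring
    _ = R ^ 2 / 8 - r ^ 2 / 8 := by
        rw [integral_add_adjacent_intervals (hgR.intervalIntegrable _ _)
          (hgR.intervalIntegrable _ _), integral_mul_g_div_self (hr.trans hR).ne',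
          integral_mul_g_div_self hr.ne']
    _ = (R^2 - r^2) / 8 := by ring
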